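/- In any symmetric GK-model (one with S(x,y) = S(y,x) for all x,y), the axioms M1: φ → □◇φ and M2: ◇□φ → φ are valid. -/

import Mathlib

open scoped Classical

noncomputable def gimp (a b : ℝ) : ℝ := if a ≤ b then 1 else b

inductive GForm : Type where
  | bot : GForm
  | var : ℕ → GForm
  | and : GForm → GForm → GForm
  | or : GForm → GForm → GForm
  | imp : GForm → GForm → GForm
  | box : GForm → GForm
  | dia : GForm → GForm

def GForm.neg (φ : GForm) : GForm := φ.imp .bot

noncomputable def ev {W : Type} (S : W → W → ℝ) (e : ℕ → W → ℝ) : GForm → W → ℝ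
  | .bot, _ => 0
  | .var p, x => e p x
  | .and φ ψ, x => min (ev S e φ x) (ev S e ψ x)
  | .or φ ψ, x => max (ev S e φ x) (ev S e ψ x)
  | .imp φ ψ, x => gimp (ev S e φ x) (ev S e ψ x)
  | .box φ, x => ⨅ y, gimp (S x y) (ev S e φ y)
  | .dia φ, x => ⨆ y, min (S x y) (ev S e φ y)

/-! For symmetric `S`, `◇` is left adjoint to `□` on `[0,1]`-valued functions: by the Gödel
residuation `min a c ≤ b ↔ c ≤ (a ⇒ b)`, both `◇f ≤ g` and `f ≤ □g` say that
`min (S x y) (f y) ≤ g x` for all `x, y`. The axioms M1 and M2 are the unit `f ≤ □◇f` and the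
counit `◇□g ≤ g` of this adjunction. -/

open Set

lemma gimp_nonneg {a b : ℝ} (hb : 0 ≤ b) : 0 ≤ gimp a b := by
  unfold gimp; split <;> linarith

lemma gimp_le_one {a b : ℝ} (hb : b ≤ 1) : gimp a b ≤ 1 := by
  unfold gimp; split <;> linarith

lemma le_gimp_iff {a b c : ℝ} (hc : c ≤ 1) : c ≤ gimp a b ↔ min a c ≤ b := by
  unfold gimp
  split_ifs with hab
  · exact ⟨fun _ => min_le_of_left_le hab, fun _ => hc⟩
  · rw [min_le_iff, or_iff_right hab]

section FuzzyModalities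

variable {W : Type} (S : W → W → ℝ)

noncomputable def fuzzyBox (g : W → ℝ) (x : W) : ℝ := ⨅ y, gimp (S x y) (g y)

noncomputable def fuzzyDia (f : W → ℝ) (x : W) : ℝ := ⨆ y, min (S x y) (f y)

lemma fuzzyBox_mem_Icc {g : W → ℝ} (hg : ∀ y, g y ∈ Icc (0:ℝ) 1) (x : W) :
    fuzzyBox S g x ∈ Icc (0:ℝ) 1 :=
  have : Nonempty W := ⟨x⟩
  ⟨le_ciInf fun y => gimp_nonneg (hg y).1,
    ciInf_le_of_le ⟨0, forall_mem_range.2 fun y => gimp_nonneg (hg y).1⟩ x (gimp_le_one (hg x).2)⟩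

lemma fuzzyDia_mem_Icc {f : W → ℝ} (hf : ∀ y, f y ∈ Icc (0:ℝ) 1) {x : W} (hSx : 0 ≤ S x x) :
    fuzzyDia S f x ∈ Icc (0:ℝ) 1 :=
  have : Nonempty W := ⟨x⟩
  ⟨le_ciSup_of_le ⟨1, forall_mem_range.2 fun y => min_le_of_right_le (hf y).2⟩ x
      (le_min hSx (hf x).1),
    ciSup_le fun y => min_le_of_right_le (hf y).2⟩

theorem fuzzyDia_le_iff_le_fuzzyBox_flip {f g : W → ℝ} (hf : ∀ y, f y ≤ 1) (hg : ∀ x, 0 ≤ g x) :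
    fuzzyDia S f ≤ g ↔ f ≤ fuzzyBox (flip S) g := by
  have hdia : ∀ x, fuzzyDia S f x ≤ g x ↔ ∀ y, min (S x y) (f y) ≤ g x := fun x =>
    have : Nonempty W := ⟨x⟩
    ciSup_le_iff ⟨1, forall_mem_range.2 fun y => min_le_of_right_le (hf y)⟩
  have hbox : ∀ y, f y ≤ fuzzyBox (flip S) g y ↔ ∀ x, min (S x y) (f y) ≤ g x := fun y => by
    have : Nonempty W := ⟨y⟩
    rw [fuzzyBox, le_ciInf_iff ⟨0, forall_mem_range.2 fun x => gimp_nonneg (hg x)⟩]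
    exact forall_congr' fun x => le_gimp_iff (hf y)
  simp only [Pi.le_def, hdia, hbox]
  exact forall_comm

end FuzzyModalities

section Evaluation

variable {W : Type} (S : W → W → ℝ) (e : ℕ → W → ℝ)

lemma ev_imp_eq_one {φ ψ : GForm} {x : W} (h : ev S e φ x ≤ ev S e ψ x) :
    ev S e (.imp φ ψ) x = 1 :=
  if_pos h

lemma ev_mem_Icc (hS : ∀ x, 0 ≤ S x x) (he : ∀ p x, e p x ∈ Icc (0:ℝ) 1) (φ : GForm) (x : W) :
    ev S e φ x ∈ Icc (0:ℝ) 1 := by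
  induction φ generalizing x with
  | bot => exact ⟨le_rfl, zero_le_one⟩
  | var p => exact he p x
  | and φ ψ ihφ ihψ => exact ⟨le_min (ihφ x).1 (ihψ x).1, min_le_of_left_le (ihφ x).2⟩
  | or φ ψ ihφ ihψ => exact ⟨le_max_of_le_left (ihφ x).1, max_le (ihφ x).2 (ihψ x).2⟩
  | imp φ ψ _ ihψ => exact ⟨gimp_nonneg (ihψ x).1, gimp_le_one (ihψ x).2⟩
  | box φ ih => exact fuzzyBox_mem_Icc S ih x
  | dia φ ih => exact fuzzyDia_mem_Icc S ih (hS x)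

end Evaluation

theorem stmt9_general (W : Type) (S : W → W → ℝ) (e : ℕ → W → ℝ)
    (hS : ∀ x y, S x y ∈ Set.Icc (0:ℝ) 1) (he : ∀ p x, e p x ∈ Set.Icc (0:ℝ) 1)
    (hsymm : ∀ x y, S x y = S y x) (φ : GForm) (x : W) :
    ev S e (.imp φ (.box (.dia φ))) x = 1 ∧
    ev S e (.imp (.dia (.box φ)) φ) x = 1 := by
  have hev := ev_mem_Icc S e (fun y => (hS y y).1) he
  have hflip : flip S = S := funext₂ fun y z => hsymm z y
  have adj {f g : W → ℝ} (hf : ∀ y, f y ≤ 1) (hg : ∀ y, 0 ≤ g y) :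
      fuzzyDia S f ≤ g ↔ f ≤ fuzzyBox S g := by
    simpa only [hflip] using fuzzyDia_le_iff_le_fuzzyBox_flip S hf hg
  have unit : ev S e φ ≤ ev S e (.box (.dia φ)) :=
    (adj (fun y => (hev φ y).2) (fun y => (hev (.dia φ) y).1)).1 le_rfl
  have counit : ev S e (.dia (.box φ)) ≤ ev S e φ :=
    (adj (fun y => (hev (.box φ) y).2) (fun y => (hev φ y).1)).2 le_rfl
  exact ⟨ev_imp_eq_one S e (unit x), ev_imp_eq_one S e (counit x)⟩

theorem stmt9 (W : Type) [Nonempty W] (S : W → W → ℝ) (e : ℕ → W → ℝ)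
    (hS : ∀ x y, S x y ∈ Set.Icc (0:ℝ) 1) (he : ∀ p x, e p x ∈ Set.Icc (0:ℝ) 1)
    (hsymm : ∀ x y, S x y = S y x) (φ : GForm) (x : W) :
    ev S e (.imp φ (.box (.dia φ))) x = 1 ∧
    ev S e (.imp (.dia (.box φ)) φ) x = 1 :=
  stmt9_general W S e hS he hsymm φ x
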